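/- Let f : [0,∞) → [0,∞) be bounded measurable, r : [0,∞) → [0,∞) bounded measurable, w : [0,∞) → [0,∞) integrable with ∫_0^∞ w = 1, and 0 ≤ ϑ < 1. If f(t) ≤ r(t) + ϑ (w * f)(t) for all t ≥ 0, then f(t) ≤ (R * r)(t) + r(t) for all t, where R = Σ_{k=1}^∞ ϑ^k w^{*k}; in particular f is dominated pointwise by Σ_{k=0}^∞ ϑ^k (w^{*k} * r)(t) (with the k = 0 term equal to r(t)). -/

import Mathlib

open MeasureTheory Filter Topology Set
open scoped ENNReal NNReal

/-- `iterConv w k` is the `(k+1)`-fold convolution power `w^{*(k+1)}` of `w` on `[0,∞)`,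
where `(a * b)(t) = ∫_0^t a(t-s) b(s) ds`. -/
noncomputable def iterConv (w : ℝ → ℝ) : ℕ → ℝ → ℝ
  | 0 => w
  | n + 1 => fun t => ∫ s in Set.Ioc (0 : ℝ) t, w (t - s) * iterConv w n s

namespace Stmt3Aux

/-- transfer an a.e. property through the reflection `s ↦ t - s`. -/
lemma ae_sub_left {p : ℝ → Prop} (t : ℝ) (hp : ∀ᵐ x : ℝ, p x) : ∀ᵐ s : ℝ, p (t - s) := by
  have hmp : MeasurePreserving (fun x : ℝ => t - x) volume volume :=
    Measure.measurePreserving_sub_left volume t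
  have h0 : (volume : Measure ℝ) {x | ¬ p x} = 0 := by
    simpa [ae_iff] using hp
  have : (volume : Measure ℝ) ((fun x : ℝ => t - x) ⁻¹' {x | ¬ p x}) = 0 :=
    hmp.quasiMeasurePreserving.preimage_null h0
  rw [ae_iff]
  simpa [Set.preimage] using this

lemma lint_shift (g : ℝ → ℝ≥0∞) (hg : Measurable g) (u t : ℝ) :
    ∫⁻ s in Set.Icc u t, g (s - u) = ∫⁻ v in Set.Icc 0 (t - u), g v := by
  have hmp : MeasurePreserving (fun v : ℝ => v + u) volume volume :=
    measurePreserving_add_right volume u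
  have hF : Measurable fun s : ℝ => (Set.Icc u t).indicator (fun s => g (s - u)) s :=
    (hg.comp (measurable_id.sub measurable_const)).indicator measurableSet_Icc
  calc ∫⁻ s in Set.Icc u t, g (s - u)
      = ∫⁻ s, (Set.Icc u t).indicator (fun s => g (s - u)) s := by
        rw [lintegral_indicator measurableSet_Icc]
    _ = ∫⁻ v, (Set.Icc u t).indicator (fun s => g (s - u)) (v + u) :=
        (hmp.lintegral_comp hF).symm
    _ = ∫⁻ v, (Set.Icc 0 (t - u)).indicator g v := by
        congr 1; funext v
        by_cases h : v ∈ Set.Icc 0 (t - u)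
        · have : v + u ∈ Set.Icc u t := by
            constructor <;> [linarith [h.1]; linarith [h.2]]
          simp [Set.indicator_of_mem this, Set.indicator_of_mem h]
        · have : v + u ∉ Set.Icc u t := by
            intro hc
            exact h ⟨by linarith [hc.1], by linarith [hc.2]⟩
          simp [Set.indicator_of_notMem this, Set.indicator_of_notMem h]
    _ = ∫⁻ v in Set.Icc 0 (t - u), g v := lintegral_indicator measurableSet_Icc _

lemma Ioc_ae_Icc (a b : ℝ) : (volume : Measure ℝ).restrict (Set.Ioc a b)
    = (volume : Measure ℝ).restrict (Set.Icc a b) :=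
  Measure.restrict_congr_set Ioc_ae_eq_Icc

lemma Ico_ae_Ioc (a b : ℝ) : (volume : Measure ℝ).restrict (Set.Ico a b)
    = (volume : Measure ℝ).restrict (Set.Ioc a b) := by
  rw [Measure.restrict_congr_set Ico_ae_eq_Icc, Measure.restrict_congr_set Ioc_ae_eq_Icc]

lemma lint_reflect (g : ℝ → ℝ≥0∞) (hg : Measurable g) (t : ℝ) :
    ∫⁻ s in Set.Ioc 0 t, g (t - s) = ∫⁻ v in Set.Ioc 0 t, g v := by
  have hmp : MeasurePreserving (fun x : ℝ => t - x) volume volume :=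
    Measure.measurePreserving_sub_left volume t
  have hF : Measurable fun s : ℝ => (Set.Ioc 0 t).indicator (fun s => g (t - s)) s :=
    (hg.comp (measurable_const.sub measurable_id)).indicator measurableSet_Ioc
  have key : ∫⁻ s in Set.Ioc 0 t, g (t - s) = ∫⁻ v in Set.Ico 0 t, g v := by
    calc ∫⁻ s in Set.Ioc 0 t, g (t - s)
        = ∫⁻ s, (Set.Ioc 0 t).indicator (fun s => g (t - s)) s := by
          rw [lintegral_indicator measurableSet_Ioc]
      _ = ∫⁻ v, (Set.Ioc 0 t).indicator (fun s => g (t - s)) (t - v) :=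
          (hmp.lintegral_comp hF).symm
      _ = ∫⁻ v, (Set.Ico 0 t).indicator g v := by
          congr 1; funext v
          by_cases h : v ∈ Set.Ico 0 t
          · have h2 : t - v ∈ Set.Ioc 0 t := ⟨by linarith [h.2], by linarith [h.1]⟩
            simp only [Set.indicator_of_mem h2, Set.indicator_of_mem h]
            congr 1; ring
          · have h2 : t - v ∉ Set.Ioc 0 t := by
              intro hc
              exact h ⟨by linarith [hc.2], by linarith [hc.1]⟩
            simp [Set.indicator_of_notMem h2, Set.indicator_of_notMem h]
      _ = ∫⁻ v in Set.Ico 0 t, g v := lintegral_indicator measurableSet_Ico _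
  rw [key, Ico_ae_Ioc]



noncomputable def convL (a b : ℝ → ℝ≥0∞) (t : ℝ) : ℝ≥0∞ :=
  ∫⁻ s in Set.Ioc (0 : ℝ) t, a (t - s) * b s

lemma convL_meas {a b : ℝ → ℝ≥0∞} (ha : Measurable a) (hb : Measurable b) :
    Measurable (convL a b) := by
  have key : convL a b = fun t => ∫⁻ s,
      ({p : ℝ × ℝ | 0 < p.2 ∧ p.2 ≤ p.1}.indicator
        (fun p => a (p.1 - p.2) * b p.2)) (t, s) := by
    funext t
    rw [convL, ← lintegral_indicator measurableSet_Ioc]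
    refine lintegral_congr fun s => ?_
    simp only [Set.indicator_apply, Set.mem_setOf_eq, Set.mem_Ioc]
  rw [key]
  have hS : MeasurableSet {p : ℝ × ℝ | 0 < p.2 ∧ p.2 ≤ p.1} :=
    (measurableSet_lt measurable_const measurable_snd).inter
      (measurableSet_le measurable_snd measurable_fst)
  have hmeas : Measurable (Function.uncurry fun t s : ℝ =>
      ({p : ℝ × ℝ | 0 < p.2 ∧ p.2 ≤ p.1}.indicator
        (fun p => a (p.1 - p.2) * b p.2)) (t, s)) := by
    have : Function.uncurry (fun t s : ℝ =>
        ({p : ℝ × ℝ | 0 < p.2 ∧ p.2 ≤ p.1}.indicator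
          (fun p => a (p.1 - p.2) * b p.2)) (t, s))
        = {p : ℝ × ℝ | 0 < p.2 ∧ p.2 ≤ p.1}.indicator
          (fun p => a (p.1 - p.2) * b p.2) := rfl
    rw [this]
    exact (((ha.comp (measurable_fst.sub measurable_snd)).mul
      (hb.comp measurable_snd))).indicator hS
  exact hmeas.lintegral_prod_right

/-- The key Fubini-type swap for convolutions. -/
lemma conv_swap (a b c : ℝ → ℝ≥0∞) (ha : Measurable a) (hb : Measurable b)
    (hc : Measurable c) (t : ℝ) :
    ∫⁻ s in Set.Ioc (0 : ℝ) t, a (t - s) * ∫⁻ u in Set.Ioc (0 : ℝ) s, b (s - u) * c u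
      = ∫⁻ u in Set.Ioc (0 : ℝ) t,
          (∫⁻ v in Set.Ioc (0 : ℝ) (t - u), a (t - u - v) * b v) * c u := by
  set S : Set (ℝ × ℝ) := {p : ℝ × ℝ | 0 < p.1 ∧ p.1 ≤ t ∧ 0 < p.2 ∧ p.2 ≤ p.1} with hSdef
  have hS : MeasurableSet S := by
    apply MeasurableSet.inter
    · exact measurableSet_lt measurable_const measurable_fst
    apply MeasurableSet.inter
    · exact measurableSet_le measurable_fst measurable_const
    apply MeasurableSet.inter
    · exact measurableSet_lt measurable_const measurable_snd
    · exact measurableSet_le measurable_snd measurable_fst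
  set G : ℝ × ℝ → ℝ≥0∞ := S.indicator (fun p => a (t - p.1) * (b (p.1 - p.2) * c p.2))
    with hGdef
  have hGm : Measurable G := by
    apply Measurable.indicator _ hS
    exact (ha.comp (measurable_const.sub measurable_fst)).mul
      ((hb.comp (measurable_fst.sub measurable_snd)).mul (hc.comp measurable_snd))
  -- LHS = iterated integral of G in order (s, u)
  have hL : (∫⁻ s in Set.Ioc (0 : ℝ) t, a (t - s) * ∫⁻ u in Set.Ioc (0 : ℝ) s, b (s - u) * c u)
      = ∫⁻ s, ∫⁻ u, G (s, u) := by
    rw [← lintegral_indicator measurableSet_Ioc]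
    congr 1; funext s
    by_cases hs : s ∈ Set.Ioc (0 : ℝ) t
    · rw [Set.indicator_of_mem hs]
      have hm : Measurable fun u : ℝ => b (s - u) * c u := by
        exact (hb.comp (measurable_const.sub measurable_id)).mul hc
      rw [← lintegral_const_mul _ hm, ← lintegral_indicator measurableSet_Ioc]
      congr 1; funext u
      by_cases hu : u ∈ Set.Ioc (0 : ℝ) s
      · have hmem : (s, u) ∈ S := ⟨hs.1, hs.2, hu.1, hu.2⟩
        rw [Set.indicator_of_mem hu, hGdef, Set.indicator_of_mem hmem]
      · have hmem : (s, u) ∉ S := fun hmem => hu ⟨hmem.2.2.1, hmem.2.2.2⟩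
        rw [Set.indicator_of_notMem hu, hGdef, Set.indicator_of_notMem hmem]
    · have : ∀ u : ℝ, G (s, u) = 0 := fun u => by
        rw [hGdef]; exact Set.indicator_of_notMem (fun hmem => hs ⟨hmem.1, hmem.2.1⟩) _
      simp [Set.indicator_of_notMem hs, this]
  -- swap
  have hswap : (∫⁻ s, ∫⁻ u, G (s, u)) = ∫⁻ u, ∫⁻ s, G (s, u) :=
    lintegral_lintegral_swap hGm.aemeasurable
  -- RHS
  have hR : (∫⁻ u, ∫⁻ s, G (s, u)) = ∫⁻ u in Set.Ioc (0 : ℝ) t,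
      (∫⁻ v in Set.Ioc (0 : ℝ) (t - u), a (t - u - v) * b v) * c u := by
    rw [← lintegral_indicator measurableSet_Ioc]
    congr 1; funext u
    by_cases hu : u ∈ Set.Ioc (0 : ℝ) t
    · rw [Set.indicator_of_mem hu]
      have hstep : ∀ s : ℝ, G (s, u)
          = (Set.Icc u t).indicator (fun s => a (t - s) * b (s - u)) s * c u := by
        intro s
        by_cases hmem : (s, u) ∈ S
        · have hsm : s ∈ Set.Icc u t := ⟨hmem.2.2.2, hmem.2.1⟩
          rw [Set.indicator_of_mem hsm, hGdef, Set.indicator_of_mem hmem]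
          ring
        · have hsm : s ∉ Set.Icc u t := by
            intro hsm
            exact hmem ⟨lt_of_lt_of_le hu.1 hsm.1, hsm.2, hu.1, hsm.1⟩
          rw [Set.indicator_of_notMem hsm, hGdef, Set.indicator_of_notMem hmem, zero_mul]
      have hmeas2 : Measurable fun s : ℝ =>
          (Set.Icc u t).indicator (fun s => a (t - s) * b (s - u)) s :=
        ((ha.comp (measurable_const.sub measurable_id)).mul
          (hb.comp (measurable_id.sub measurable_const))).indicator measurableSet_Icc
      calc ∫⁻ s, G (s, u)
          = ∫⁻ s, (Set.Icc u t).indicator (fun s => a (t - s) * b (s - u)) s * c u := by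
            congr 1; funext s; exact hstep s
        _ = (∫⁻ s, (Set.Icc u t).indicator (fun s => a (t - s) * b (s - u)) s) * c u :=
            lintegral_mul_const _ hmeas2
        _ = (∫⁻ s in Set.Icc u t, a (t - s) * b (s - u)) * c u := by
            rw [lintegral_indicator measurableSet_Icc]
        _ = (∫⁻ v in Set.Icc 0 (t - u), a (t - u - v) * b v) * c u := by
            have := lint_shift (fun v => a (t - u - v) * b v)
              ((ha.comp (measurable_const.sub measurable_id)).mul hb) u t
            rw [← this]
            congr 1
            refine setLIntegral_congr_fun measurableSet_Icc (fun s _ => ?_)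
            congr 2
            ring
        _ = (∫⁻ v in Set.Ioc (0:ℝ) (t - u), a (t - u - v) * b v) * c u := by
            rw [Ioc_ae_Icc]
    · have : ∀ s : ℝ, G (s, u) = 0 := fun s => by
        rw [hGdef]
        exact Set.indicator_of_notMem (fun hmem => hu ⟨hmem.2.2.1, le_trans hmem.2.2.2 hmem.2.1⟩) _
      simp [Set.indicator_of_notMem hu, this]
  rw [hL, hswap, hR]

noncomputable def W (w' : ℝ → ℝ) : ℕ → ℝ → ℝ≥0∞
  | 0 => fun s => ENNReal.ofReal (w' s)
  | n + 1 => convL (fun s => ENNReal.ofReal (w' s)) (W w' n)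

lemma W_meas {w' : ℝ → ℝ} (hw'm : Measurable w') (n : ℕ) : Measurable (W w' n) := by
  induction n with
  | zero => exact ENNReal.measurable_ofReal.comp hw'm
  | succ n ih => exact convL_meas (ENNReal.measurable_ofReal.comp hw'm) ih

lemma W_subinv {w' : ℝ → ℝ} (hw'm : Measurable w')
    (hw'1 : ∀ x : ℝ, ∫⁻ s in Set.Ioc (0 : ℝ) x, ENNReal.ofReal (w' s) ≤ 1) (n : ℕ) :
    ∀ x : ℝ, ∫⁻ s in Set.Ioc (0 : ℝ) x, W w' n s ≤ 1 := by
  induction n with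
  | zero => exact hw'1
  | succ n ih =>
    intro x
    have hkey := conv_swap (fun _ => 1) (fun s => ENNReal.ofReal (w' s)) (W w' n)
      measurable_const (ENNReal.measurable_ofReal.comp hw'm) (W_meas hw'm n) x
    simp only [one_mul] at hkey
    have : ∫⁻ s in Set.Ioc (0 : ℝ) x, W w' (n + 1) s
        = ∫⁻ u in Set.Ioc (0 : ℝ) x,
            (∫⁻ v in Set.Ioc (0 : ℝ) (x - u), ENNReal.ofReal (w' v)) * W w' n u := by
      rw [← hkey]; rfl
    rw [this]
    calc ∫⁻ u in Set.Ioc (0 : ℝ) x,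
          (∫⁻ v in Set.Ioc (0 : ℝ) (x - u), ENNReal.ofReal (w' v)) * W w' n u
        ≤ ∫⁻ u in Set.Ioc (0 : ℝ) x, 1 * W w' n u := by
          refine lintegral_mono fun u => ?_
          exact mul_le_mul_left (hw'1 (x - u)) _
      _ = ∫⁻ u in Set.Ioc (0 : ℝ) x, W w' n u := by simp
      _ ≤ 1 := ih x

lemma W_reflect_le {w' : ℝ → ℝ} (hw'm : Measurable w')
    (hw'1 : ∀ x : ℝ, ∫⁻ s in Set.Ioc (0 : ℝ) x, ENNReal.ofReal (w' s) ≤ 1) (n : ℕ) (t : ℝ) :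
    ∫⁻ s in Set.Ioc (0 : ℝ) t, W w' n (t - s) ≤ 1 := by
  rw [lint_reflect _ (W_meas hw'm n)]
  exact W_subinv hw'm hw'1 n t

/-- a bound on convolutions against a bounded function -/
lemma convL_le_bound {w' : ℝ → ℝ} (hw'm : Measurable w')
    (hw'1 : ∀ x : ℝ, ∫⁻ s in Set.Ioc (0 : ℝ) x, ENNReal.ofReal (w' s) ≤ 1)
    (n : ℕ) (g : ℝ → ℝ≥0∞) (M : ℝ≥0∞) (hg : ∀ s, g s ≤ M) (t : ℝ) :
    convL (W w' n) g t ≤ M := by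
  calc convL (W w' n) g t ≤ ∫⁻ s in Set.Ioc (0 : ℝ) t, W w' n (t - s) * M :=
        lintegral_mono fun s => mul_le_mul_right (hg s) _
    _ = (∫⁻ s in Set.Ioc (0 : ℝ) t, W w' n (t - s)) * M := by
        have hm : Measurable fun s : ℝ => W w' n (t - s) :=
          (W_meas hw'm n).comp (measurable_const.sub measurable_id)
        exact lintegral_mul_const _ hm
    _ ≤ 1 * M := mul_le_mul_left (W_reflect_le hw'm hw'1 n t) M
    _ = M := one_mul M

lemma convL_W_succ {w' : ℝ → ℝ} (hw'm : Measurable w') (n : ℕ) {g : ℝ → ℝ≥0∞}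
    (hg : Measurable g) (t : ℝ) :
    ∫⁻ s in Set.Ioc (0 : ℝ) t, ENNReal.ofReal (w' (t - s)) * convL (W w' n) g s
      = convL (W w' (n + 1)) g t := by
  have hkey := conv_swap (fun s => ENNReal.ofReal (w' s)) (W w' n) g
    (ENNReal.measurable_ofReal.comp hw'm) (W_meas hw'm n) hg t
  calc ∫⁻ s in Set.Ioc (0 : ℝ) t, ENNReal.ofReal (w' (t - s)) * convL (W w' n) g s
      = ∫⁻ u in Set.Ioc (0 : ℝ) t,
          (∫⁻ v in Set.Ioc (0 : ℝ) (t - u), ENNReal.ofReal (w' (t - u - v)) * W w' n v) * g u :=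
        hkey
    _ = convL (W w' (n + 1)) g t := by
        rw [convL]
        refine lintegral_congr fun u => ?_
        rfl

lemma iterConv_nonneg {w' : ℝ → ℝ} (hw'nn : ∀ s, 0 ≤ w' s) (n : ℕ) :
    ∀ t : ℝ, 0 ≤ iterConv w' n t := by
  induction n with
  | zero => exact hw'nn
  | succ n ih =>
    intro t
    simp only [iterConv]
    exact integral_nonneg fun s => mul_nonneg (hw'nn _) (ih s)

lemma iterConv_meas {w' : ℝ → ℝ} (hw'm : Measurable w') (n : ℕ) :
    Measurable (iterConv w' n) := by
  induction n with
  | zero => exact hw'm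
  | succ n ih =>
    have hS : MeasurableSet {p : ℝ × ℝ | 0 < p.2 ∧ p.2 ≤ p.1} :=
      (measurableSet_lt measurable_const measurable_snd).inter
        (measurableSet_le measurable_snd measurable_fst)
    have key : iterConv w' (n + 1) = fun t => ∫ s,
        ({p : ℝ × ℝ | 0 < p.2 ∧ p.2 ≤ p.1}.indicator
          (fun p => w' (p.1 - p.2) * iterConv w' n p.2)) (t, s) := by
      funext t
      simp only [iterConv]
      rw [← integral_indicator measurableSet_Ioc]
      refine integral_congr_ae (ae_of_all _ fun s => ?_)
      simp only [Set.indicator_apply, Set.mem_setOf_eq, Set.mem_Ioc]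
    rw [key]
    have hsm : StronglyMeasurable (Function.uncurry fun t s : ℝ =>
        ({p : ℝ × ℝ | 0 < p.2 ∧ p.2 ≤ p.1}.indicator
          (fun p => w' (p.1 - p.2) * iterConv w' n p.2)) (t, s)) := by
      have : Function.uncurry (fun t s : ℝ =>
          ({p : ℝ × ℝ | 0 < p.2 ∧ p.2 ≤ p.1}.indicator
            (fun p => w' (p.1 - p.2) * iterConv w' n p.2)) (t, s))
          = {p : ℝ × ℝ | 0 < p.2 ∧ p.2 ≤ p.1}.indicator
            (fun p => w' (p.1 - p.2) * iterConv w' n p.2) := rfl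
      rw [this]
      exact (((hw'm.comp (measurable_fst.sub measurable_snd)).mul
        (ih.comp measurable_snd)).indicator hS).stronglyMeasurable
    exact hsm.integral_prod_right.measurable

lemma iterConv_ae_W {w' : ℝ → ℝ} (hw'm : Measurable w') (hw'nn : ∀ s, 0 ≤ w' s)
    (hw'1 : ∀ x : ℝ, ∫⁻ s in Set.Ioc (0 : ℝ) x, ENNReal.ofReal (w' s) ≤ 1) (n : ℕ) :
    ∀ᵐ t : ℝ, ENNReal.ofReal (iterConv w' n t) = W w' n t := by
  induction n with
  | zero => exact ae_of_all _ fun t => rfl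
  | succ n ih =>
    have hfin : ∀ᵐ t : ℝ, W w' (n + 1) t ≠ ∞ := by
      have hcov : ∀ k : ℕ, ∀ᵐ t ∂(volume.restrict (Set.Ioc (0 : ℝ) k)),
          W w' (n + 1) t < ∞ := fun k =>
        ae_lt_top (W_meas hw'm (n + 1))
          (ne_top_of_le_ne_top ENNReal.one_ne_top (W_subinv hw'm hw'1 (n + 1) k))
      have hcov' : ∀ᵐ t : ℝ, ∀ k : ℕ, t ∈ Set.Ioc (0 : ℝ) (k : ℝ) → W w' (n + 1) t < ∞ := by
        rw [ae_all_iff]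
        intro k
        exact (ae_restrict_iff' measurableSet_Ioc).mp (hcov k)
      filter_upwards [hcov'] with t ht
      by_cases h0 : 0 < t
      · exact (ht ⌈t⌉₊ ⟨h0, Nat.le_ceil t⟩).ne
      · have : W w' (n + 1) t = 0 := by
          show convL _ _ t = 0
          rw [convL, Set.Ioc_eq_empty h0]
          simp
        simp [this]
    filter_upwards [hfin] with t hfint
    have hae : (fun s => ENNReal.ofReal (iterConv w' n s))
        =ᵐ[volume.restrict (Set.Ioc (0 : ℝ) t)] (fun s => W w' n s) := ae_restrict_of_ae ih
    have h1 : iterConv w' (n + 1) t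
        = (∫⁻ s in Set.Ioc (0 : ℝ) t, ENNReal.ofReal (w' (t - s) * iterConv w' n s)).toReal := by
      simp only [iterConv]
      exact integral_eq_lintegral_of_nonneg_ae
        (ae_of_all _ fun s => mul_nonneg (hw'nn _) (iterConv_nonneg hw'nn n s))
        ((hw'm.comp (measurable_const.sub measurable_id)).mul
          (iterConv_meas hw'm n)).aestronglyMeasurable
    have h2 : ∫⁻ s in Set.Ioc (0 : ℝ) t, ENNReal.ofReal (w' (t - s) * iterConv w' n s)
        = W w' (n + 1) t := by
      show _ = convL _ _ t
      rw [convL]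
      refine lintegral_congr_ae ?_
      filter_upwards [hae] with s hs
      rw [ENNReal.ofReal_mul (hw'nn _), hs]
    rw [h1, h2, ENNReal.ofReal_toReal hfint]

lemma convL_W0_succ {w' : ℝ → ℝ} (hw'm : Measurable w') (n : ℕ) {g : ℝ → ℝ≥0∞}
    (hg : Measurable g) (t : ℝ) :
    ∫⁻ s in Set.Ioc (0 : ℝ) t, W w' 0 (t - s) * convL (W w' n) g s
      = convL (W w' (n + 1)) g t := by
  have hkey := conv_swap (fun s => ENNReal.ofReal (w' s)) (W w' n) g
    (ENNReal.measurable_ofReal.comp hw'm) (W_meas hw'm n) hg t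
  calc ∫⁻ s in Set.Ioc (0 : ℝ) t, W w' 0 (t - s) * convL (W w' n) g s
      = ∫⁻ u in Set.Ioc (0 : ℝ) t,
          (∫⁻ v in Set.Ioc (0 : ℝ) (t - u), ENNReal.ofReal (w' (t - u - v)) * W w' n v) * g u :=
        hkey
    _ = convL (W w' (n + 1)) g t := by
        rw [convL]
        exact lintegral_congr fun u => rfl

lemma main_ind {w' : ℝ → ℝ} (hw'm : Measurable w')
    (F R : ℝ → ℝ≥0∞) (hFm : Measurable F) (hRm : Measurable R) (θ : ℝ≥0∞)
    (hsubE : ∀ t : ℝ, 0 ≤ t → F t ≤ R t + θ * convL (W w' 0) F t) :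
    ∀ n : ℕ, ∀ t : ℝ, 0 ≤ t →
      F t ≤ R t + (∑ k ∈ Finset.range n, θ ^ (k + 1) * convL (W w' k) R t)
        + θ ^ (n + 1) * convL (W w' n) F t := by
  intro n
  induction n with
  | zero =>
    intro t ht
    simpa [pow_one] using hsubE t ht
  | succ n ih =>
    intro t ht
    have hSnm : Measurable fun s => ∑ k ∈ Finset.range n, θ ^ (k + 1) * convL (W w' k) R s :=
      Finset.measurable_sum _ fun k _ =>
        (convL_meas (W_meas hw'm k) hRm).const_mul _
    have hW0c : Measurable fun s : ℝ => W w' 0 (t - s) :=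
      (W_meas hw'm 0).comp (measurable_const.sub measurable_id)
    have h2 : convL (W w' 0) F t ≤ ∫⁻ s in Set.Ioc (0 : ℝ) t, W w' 0 (t - s) *
        (R s + (∑ k ∈ Finset.range n, θ ^ (k + 1) * convL (W w' k) R s)
          + θ ^ (n + 1) * convL (W w' n) F s) := by
      rw [convL]
      refine setLIntegral_mono_ae' measurableSet_Ioc (ae_of_all _ fun s hs => ?_)
      exact mul_le_mul_right (ih s hs.1.le) _
    have h3 : (∫⁻ s in Set.Ioc (0 : ℝ) t, W w' 0 (t - s) *
        (R s + (∑ k ∈ Finset.range n, θ ^ (k + 1) * convL (W w' k) R s)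
          + θ ^ (n + 1) * convL (W w' n) F s))
        = convL (W w' 0) R t
          + (∑ k ∈ Finset.range n, θ ^ (k + 1) * convL (W w' (k + 1)) R t)
          + θ ^ (n + 1) * convL (W w' (n + 1)) F t := by
      have e1 : ∀ s : ℝ, W w' 0 (t - s) *
          (R s + (∑ k ∈ Finset.range n, θ ^ (k + 1) * convL (W w' k) R s)
            + θ ^ (n + 1) * convL (W w' n) F s)
          = W w' 0 (t - s) * R s
            + ((∑ k ∈ Finset.range n,
                θ ^ (k + 1) * (W w' 0 (t - s) * convL (W w' k) R s))
              + θ ^ (n + 1) * (W w' 0 (t - s) * convL (W w' n) F s)) := by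
        intro s
        rw [mul_add, mul_add, Finset.mul_sum, add_assoc]
        congr 1
        congr 1
        · exact Finset.sum_congr rfl fun k _ => mul_left_comm _ _ _
        · exact mul_left_comm _ _ _
      rw [lintegral_congr e1]
      have hA : Measurable fun s : ℝ => W w' 0 (t - s) * R s := hW0c.mul hRm
      have hB : Measurable fun s : ℝ => ∑ k ∈ Finset.range n,
          θ ^ (k + 1) * (W w' 0 (t - s) * convL (W w' k) R s) :=
        Finset.measurable_sum _ fun k _ =>
          (hW0c.mul (convL_meas (W_meas hw'm k) hRm)).const_mul _
      rw [lintegral_add_left hA, lintegral_add_left hB, ← add_assoc]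
      have hsum : (∫⁻ s in Set.Ioc (0 : ℝ) t, ∑ k ∈ Finset.range n,
            θ ^ (k + 1) * (W w' 0 (t - s) * convL (W w' k) R s))
          = ∑ k ∈ Finset.range n, θ ^ (k + 1) * convL (W w' (k + 1)) R t := by
        rw [lintegral_finset_sum (f := fun k s => θ ^ (k + 1) * (W w' 0 (t - s) * convL (W w' k) R s)) _ fun k _ =>
          (hW0c.mul (convL_meas (W_meas hw'm k) hRm)).const_mul _]
        refine Finset.sum_congr rfl fun k _ => ?_
        rw [lintegral_const_mul _ (f := fun s => W w' 0 (t - s) * convL (W w' k) R s) (hW0c.mul (convL_meas (W_meas hw'm k) hRm))]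
        rw [convL_W0_succ hw'm k hRm t]
      have hlast : (∫⁻ s in Set.Ioc (0 : ℝ) t,
            θ ^ (n + 1) * (W w' 0 (t - s) * convL (W w' n) F s))
          = θ ^ (n + 1) * convL (W w' (n + 1)) F t := by
        rw [lintegral_const_mul _ (f := fun s => W w' 0 (t - s) * convL (W w' n) F s) (hW0c.mul (convL_meas (W_meas hw'm n) hFm))]
        rw [convL_W0_succ hw'm n hFm t]
      rw [hsum, hlast]
      rfl
    calc F t ≤ R t + θ * convL (W w' 0) F t := hsubE t ht
      _ ≤ R t + θ * (convL (W w' 0) R t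
          + (∑ k ∈ Finset.range n, θ ^ (k + 1) * convL (W w' (k + 1)) R t)
          + θ ^ (n + 1) * convL (W w' (n + 1)) F t) := by
          refine add_le_add le_rfl (mul_le_mul_right ?_ θ)
          rw [← h3]
          exact h2
      _ = R t + (∑ k ∈ Finset.range (n + 1), θ ^ (k + 1) * convL (W w' k) R t)
          + θ ^ (n + 1 + 1) * convL (W w' (n + 1)) F t := by
          rw [Finset.sum_range_succ']
          rw [mul_add, mul_add, Finset.mul_sum]
          have e2 : ∀ k, θ * (θ ^ (k + 1) * convL (W w' (k + 1)) R t)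
              = θ ^ (k + 1 + 1) * convL (W w' (k + 1)) R t := fun k => by ring
          rw [Finset.sum_congr rfl fun k _ => e2 k]
          have e3 : θ * (θ ^ (n + 1) * convL (W w' (n + 1)) F t)
              = θ ^ (n + 1 + 1) * convL (W w' (n + 1)) F t := by ring
          rw [e3]
          have e4 : θ * convL (W w' 0) R t = θ ^ (0 + 1) * convL (W w' 0) R t := by
            rw [pow_one]
          rw [e4]
          ring

end Stmt3Aux

open Stmt3Aux in
theorem stmt3 (f r w : ℝ → ℝ) (ϑ : ℝ) (hϑ0 : 0 ≤ ϑ) (hϑ1 : ϑ < 1)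
    (hfm : Measurable f) (hrm : Measurable r)
    (hfnn : ∀ t : ℝ, 0 ≤ f t) (hrnn : ∀ t : ℝ, 0 ≤ r t)
    (hfbd : ∃ Mf : ℝ, ∀ t : ℝ, f t ≤ Mf) (hrbd : ∃ Mr : ℝ, ∀ t : ℝ, r t ≤ Mr)
    (hwnn : ∀ s : ℝ, 0 ≤ w s)
    (hwint : IntegrableOn w (Set.Ici (0 : ℝ)))
    (hw1 : ∫ s in Set.Ici (0 : ℝ), w s = 1)
    (hsub : ∀ t : ℝ, 0 ≤ t →
      f t ≤ r t + ϑ * ∫ s in Set.Ioc (0 : ℝ) t, w (t - s) * f s) :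
    ∀ t : ℝ, 0 ≤ t →
      f t ≤ r t + ∑' k : ℕ, ϑ ^ (k + 1) * ∫ s in Set.Ioc (0 : ℝ) t, iterConv w k (t - s) * r s := by
  obtain ⟨Mf, hMf⟩ := hfbd
  obtain ⟨Mr, hMr⟩ := hrbd
  -- a measurable modification of `w`
  have hwaesm : AEStronglyMeasurable w (volume.restrict (Set.Ici (0 : ℝ))) := hwint.1
  set w' : ℝ → ℝ := (Set.Ici (0 : ℝ)).indicator (fun x => max (hwaesm.mk w x) 0) with hw'def
  have hw'm : Measurable w' :=
    ((hwaesm.stronglyMeasurable_mk.measurable).max measurable_const).indicator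
      measurableSet_Ici
  have hw'nn : ∀ s, 0 ≤ w' s := fun s =>
    Set.indicator_nonneg (fun x _ => le_max_right _ _) s
  have hw'ae : w =ᵐ[volume.restrict (Set.Ici (0 : ℝ))] w' := by
    filter_upwards [hwaesm.ae_eq_mk, ae_restrict_mem measurableSet_Ici] with x hx hxm
    rw [hw'def, Set.indicator_of_mem hxm, ← hx, max_eq_left (hwnn x)]
  have hwIci : ∀ᵐ x : ℝ, x ∈ Set.Ici (0 : ℝ) → w x = w' x :=
    (ae_restrict_iff' measurableSet_Ici).mp hw'ae
  have hw'1 : ∀ x : ℝ, ∫⁻ s in Set.Ioc (0 : ℝ) x, ENNReal.ofReal (w' s) ≤ 1 := by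
    intro x
    have h1 : ∫⁻ s in Set.Ici (0 : ℝ), ENNReal.ofReal (w' s) = 1 := by
      have e : ∫⁻ s in Set.Ici (0 : ℝ), ENNReal.ofReal (w' s)
          = ∫⁻ s in Set.Ici (0 : ℝ), ENNReal.ofReal (w s) :=
        lintegral_congr_ae (by filter_upwards [hw'ae] with s hs; rw [hs])
      rw [e, ← ofReal_integral_eq_lintegral_ofReal hwint (ae_of_all _ hwnn), hw1,
        ENNReal.ofReal_one]
    calc ∫⁻ s in Set.Ioc (0 : ℝ) x, ENNReal.ofReal (w' s)
        ≤ ∫⁻ s in Set.Ici (0 : ℝ), ENNReal.ofReal (w' s) :=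
          lintegral_mono_set (fun s hs => le_of_lt hs.1)
      _ = 1 := h1
  set F : ℝ → ℝ≥0∞ := fun s => ENNReal.ofReal (f s) with hFdef
  set R : ℝ → ℝ≥0∞ := fun s => ENNReal.ofReal (r s) with hRdef
  set θ : ℝ≥0∞ := ENNReal.ofReal ϑ with hθdef
  have hFm : Measurable F := ENNReal.measurable_ofReal.comp hfm
  have hRm : Measurable R := ENNReal.measurable_ofReal.comp hrm
  have hθ1 : θ < 1 := by rw [hθdef]; exact ENNReal.ofReal_lt_one.mpr hϑ1
  -- the subinvariance inequality in `ℝ≥0∞`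
  have hsubE : ∀ t : ℝ, 0 ≤ t → F t ≤ R t + θ * convL (W w' 0) F t := by
    intro t ht
    have hIint : 0 ≤ ∫ s in Set.Ioc (0 : ℝ) t, w (t - s) * f s :=
      integral_nonneg fun s => mul_nonneg (hwnn _) (hfnn s)
    have e0 : F t ≤ ENNReal.ofReal (r t + ϑ * ∫ s in Set.Ioc (0 : ℝ) t, w (t - s) * f s) :=
      ENNReal.ofReal_le_ofReal (hsub t ht)
    rw [ENNReal.ofReal_add (hrnn t) (mul_nonneg hϑ0 hIint), ENNReal.ofReal_mul hϑ0] at e0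
    refine le_trans e0 (add_le_add le_rfl (mul_le_mul_right ?_ θ))
    have hwrefl : ∀ᵐ s ∂(volume.restrict (Set.Ioc (0 : ℝ) t)), w (t - s) = w' (t - s) := by
      filter_upwards [ae_restrict_of_ae
        (ae_sub_left (p := fun x => x ∈ Set.Ici (0 : ℝ) → w x = w' x) t hwIci),
        ae_restrict_mem measurableSet_Ioc] with s hs hsm
      exact hs (by simp only [Set.mem_Ici]; linarith [hsm.2])
    have hwm' : AEStronglyMeasurable (fun s => w (t - s) * f s)
        (volume.restrict (Set.Ioc (0 : ℝ) t)) := by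
      refine AEStronglyMeasurable.mul ?_ hfm.aestronglyMeasurable
      have hcm : Measurable fun s : ℝ => w' (t - s) :=
        hw'm.comp (measurable_const.sub measurable_id)
      exact hcm.aestronglyMeasurable.congr
        (by filter_upwards [hwrefl] with s hs; exact hs.symm)
    rw [integral_eq_lintegral_of_nonneg_ae
      (ae_of_all _ fun s => mul_nonneg (hwnn _) (hfnn s)) hwm']
    refine le_trans ENNReal.ofReal_toReal_le (le_of_eq ?_)
    show _ = ∫⁻ s in Set.Ioc (0 : ℝ) t, W w' 0 (t - s) * F s
    refine lintegral_congr_ae ?_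
    filter_upwards [hwrefl] with s hs
    rw [ENNReal.ofReal_mul (hwnn _), hs]
    rfl
  -- pass to the limit
  intro t ht
  set S : ℝ≥0∞ := ∑' k : ℕ, θ ^ (k + 1) * convL (W w' k) R t with hSdef
  have hMfE : ∀ s, F s ≤ ENNReal.ofReal Mf := fun s => ENNReal.ofReal_le_ofReal (hMf s)
  have hbound : ∀ n : ℕ, F t ≤ (R t + S) + θ ^ (n + 1) * ENNReal.ofReal Mf := by
    intro n
    have h1 := main_ind hw'm F R hFm hRm θ hsubE n t ht
    have h2 : θ ^ (n + 1) * convL (W w' n) F t ≤ θ ^ (n + 1) * ENNReal.ofReal Mf :=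
      mul_le_mul_right (convL_le_bound hw'm hw'1 n F _ hMfE t) _
    have h3 : (∑ k ∈ Finset.range n, θ ^ (k + 1) * convL (W w' k) R t) ≤ S :=
      ENNReal.sum_le_tsum _
    calc F t ≤ R t + (∑ k ∈ Finset.range n, θ ^ (k + 1) * convL (W w' k) R t)
          + θ ^ (n + 1) * convL (W w' n) F t := h1
      _ ≤ R t + S + θ ^ (n + 1) * ENNReal.ofReal Mf :=
          add_le_add (add_le_add le_rfl h3) h2
  have htend : Tendsto (fun n : ℕ => (R t + S) + θ ^ (n + 1) * ENNReal.ofReal Mf)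
      atTop (𝓝 ((R t + S) + 0)) := by
    refine Tendsto.const_add _ ?_
    have h1 : Tendsto (fun n : ℕ => θ ^ n) atTop (𝓝 0) :=
      ENNReal.tendsto_pow_atTop_nhds_zero_of_lt_one hθ1
    have h2 : Tendsto (fun n : ℕ => θ ^ (n + 1)) atTop (𝓝 0) :=
      h1.comp (tendsto_add_atTop_nat 1)
    simpa using ENNReal.Tendsto.mul_const h2 (Or.inr ENNReal.ofReal_ne_top)
  have hlim : F t ≤ R t + S := by
    have := ge_of_tendsto' htend hbound
    simpa using this
  -- finiteness
  have hMrE : ∀ s, R s ≤ ENNReal.ofReal Mr := fun s => ENNReal.ofReal_le_ofReal (hMr s)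
  have hGle : ∀ k : ℕ, convL (W w' k) R t ≤ ENNReal.ofReal Mr := fun k =>
    convL_le_bound hw'm hw'1 k R _ hMrE t
  have hSfin : S ≠ ∞ := by
    have hle : S ≤ ∑' k : ℕ, θ ^ (k + 1) * ENNReal.ofReal Mr :=
      ENNReal.tsum_le_tsum fun k => mul_le_mul_right (hGle k) _
    have heq : (∑' k : ℕ, θ ^ (k + 1) * ENNReal.ofReal Mr)
        = (θ * (1 - θ)⁻¹) * ENNReal.ofReal Mr := by
      rw [ENNReal.tsum_mul_right, ENNReal.tsum_geometric_add_one]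
    have hne : (θ * (1 - θ)⁻¹) * ENNReal.ofReal Mr ≠ ∞ := by
      refine ENNReal.mul_ne_top (ENNReal.mul_ne_top ENNReal.ofReal_ne_top ?_)
        ENNReal.ofReal_ne_top
      refine ENNReal.inv_ne_top.mpr ?_
      intro hc
      rw [tsub_eq_zero_iff_le] at hc
      exact absurd (lt_of_lt_of_le hθ1 hc) (lt_irrefl θ)
    exact ne_top_of_le_ne_top (heq ▸ hne) hle
  have hRfin : R t ≠ ∞ := ENNReal.ofReal_ne_top
  -- identify the terms with the statement's integrals
  have hICae : ∀ k : ℕ, ∀ᵐ x : ℝ, 0 ≤ x → iterConv w k x = iterConv w' k x := by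
    intro k
    induction k with
    | zero =>
      filter_upwards [hwIci] with x hx
      exact fun h0x => hx h0x
    | succ k ihk =>
      have hev : ∀ x : ℝ, iterConv w (k + 1) x = iterConv w' (k + 1) x := by
        intro x
        simp only [iterConv]
        refine integral_congr_ae ?_
        filter_upwards [ae_restrict_of_ae
          (ae_sub_left (p := fun y => y ∈ Set.Ici (0 : ℝ) → w y = w' y) x hwIci),
          ae_restrict_of_ae ihk, ae_restrict_mem measurableSet_Ioc] with s hws hks hsm
        rw [hws (by simp only [Set.mem_Ici]; linarith [hsm.2]), hks hsm.1.le]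
      exact ae_of_all _ fun x _ => hev x
  have hWae := iterConv_ae_W hw'm hw'nn hw'1
  have hGk : ∀ k : ℕ, (∫ s in Set.Ioc (0 : ℝ) t, iterConv w k (t - s) * r s)
      = (convL (W w' k) R t).toReal := by
    intro k
    have e1 : (∫ s in Set.Ioc (0 : ℝ) t, iterConv w k (t - s) * r s)
        = ∫ s in Set.Ioc (0 : ℝ) t, iterConv w' k (t - s) * r s := by
      refine integral_congr_ae ?_
      filter_upwards [ae_restrict_of_ae
        (ae_sub_left (p := fun x => 0 ≤ x → iterConv w k x = iterConv w' k x) t (hICae k)),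
        ae_restrict_mem measurableSet_Ioc] with s hs hsm
      rw [hs (by linarith [hsm.2])]
    have e2 : (∫ s in Set.Ioc (0 : ℝ) t, iterConv w' k (t - s) * r s)
        = (∫⁻ s in Set.Ioc (0 : ℝ) t, ENNReal.ofReal (iterConv w' k (t - s) * r s)).toReal :=
      integral_eq_lintegral_of_nonneg_ae
        (ae_of_all _ fun s => mul_nonneg (iterConv_nonneg hw'nn k _) (hrnn s))
        (((iterConv_meas hw'm k).comp (measurable_const.sub measurable_id)).mul
          hrm).aestronglyMeasurable
    have e3 : (∫⁻ s in Set.Ioc (0 : ℝ) t, ENNReal.ofReal (iterConv w' k (t - s) * r s))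
        = convL (W w' k) R t := by
      show _ = ∫⁻ s in Set.Ioc (0 : ℝ) t, W w' k (t - s) * R s
      refine lintegral_congr_ae ?_
      filter_upwards [ae_restrict_of_ae
        (ae_sub_left (p := fun x => ENNReal.ofReal (iterConv w' k x) = W w' k x) t
          (hWae k))] with s hs
      rw [ENNReal.ofReal_mul (iterConv_nonneg hw'nn k _), hs]
    rw [e1, e2, e3]
  have htermfin : ∀ k : ℕ, θ ^ (k + 1) * convL (W w' k) R t ≠ ∞ := fun k =>
    ne_top_of_le_ne_top hSfin (ENNReal.le_tsum k)
  have hterm : ∀ k : ℕ,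
      ϑ ^ (k + 1) * (∫ s in Set.Ioc (0 : ℝ) t, iterConv w k (t - s) * r s)
        = (θ ^ (k + 1) * convL (W w' k) R t).toReal := by
    intro k
    rw [ENNReal.toReal_mul, ENNReal.toReal_pow, hGk k, hθdef,
      ENNReal.toReal_ofReal hϑ0]
  have hrhs : r t + ∑' k : ℕ,
      ϑ ^ (k + 1) * ∫ s in Set.Ioc (0 : ℝ) t, iterConv w k (t - s) * r s
      = (R t + S).toReal := by
    rw [ENNReal.toReal_add hRfin hSfin, hSdef, ENNReal.tsum_toReal_eq htermfin,
      hRdef, ENNReal.toReal_ofReal (hrnn t)]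
    congr 1
    exact tsum_congr hterm
  calc f t = (F t).toReal := (ENNReal.toReal_ofReal (hfnn t)).symm
    _ ≤ (R t + S).toReal :=
        ENNReal.toReal_mono (ENNReal.add_ne_top.mpr ⟨hRfin, hSfin⟩) hlim
    _ = r t + ∑' k : ℕ,
        ϑ ^ (k + 1) * ∫ s in Set.Ioc (0 : ℝ) t, iterConv w k (t - s) * r s := hrhs.symm
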